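/- Let X be a set, let μ₁ and μ₂ be sub-distributions over X with equal total mass, and let E : X × X → [0,∞] be any cost function. Then there exists a coupling μ ∈ Γ(μ₁, μ₂) attaining the Kantorovich infimum: E_μ[E] = K_E(μ₁, μ₂) = inf_{ν ∈ Γ(μ₁,μ₂)} E_ν[E]. -/
import Mathlib


open scoped ENNReal

open Filter Topology

/-- A sub-distribution over `X`: a `[0,∞]`-valued mass function with total mass at most 1
(countability of the support is automatic since the total mass is finite). -/
def IsSubdist {X : Type*} (μ : X → ℝ≥0∞) : Prop := ∑' x, μ x ≤ 1

/-- A (probability) distribution over `X`: total mass exactly 1. -/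
def IsDist {X : Type*} (μ : X → ℝ≥0∞) : Prop := ∑' x, μ x = 1

/-- `μ` is a coupling of `μ₁` and `μ₂`: its first and second marginals are `μ₁` and `μ₂`. -/
def IsCoupling {X : Type*} (μ : X × X → ℝ≥0∞) (μ₁ μ₂ : X → ℝ≥0∞) : Prop :=
  (∀ x₁, ∑' x₂, μ (x₁, x₂) = μ₁ x₁) ∧ (∀ x₂, ∑' x₁, μ (x₁, x₂) = μ₂ x₂)

/-- Expected cost of `E` under a mass function `μ` on pairs. -/
noncomputable def expCost {X : Type*} (E : X × X → ℝ≥0∞) (μ : X × X → ℝ≥0∞) : ℝ≥0∞ :=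
  ∑' p, E p * μ p

/-- Kantorovich lifting of a cost function `E` (infimum of expected cost over couplings;
`∞` if there is no coupling). -/
noncomputable def kant {X : Type*} (E : X × X → ℝ≥0∞) (μ₁ μ₂ : X → ℝ≥0∞) : ℝ≥0∞ :=
  ⨅ (μ : X × X → ℝ≥0∞) (_ : IsCoupling μ μ₁ μ₂), expCost E μ

/-- Total variation distance `(1/2) Σ_x |μ₁(x) − μ₂(x)|`. -/
noncomputable def tv {X : Type*} (μ₁ μ₂ : X → ℝ≥0∞) : ℝ≥0∞ :=
  (1 / 2) * ∑' x, max (μ₁ x - μ₂ x) (μ₂ x - μ₁ x)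

/-- Dominated convergence along a filter, for constant sums: if `f i · → g` pointwise along `l`,
the `f i` are dominated by a summable `d`, and each `f i` has total mass `m`, then `g` has
total mass `m`. -/
private lemma tsum_lim_eq_of_dominated {Y ι : Type*} {l : Filter ι} [l.NeBot]
    {f : ι → Y → ℝ≥0∞} {g d : Y → ℝ≥0∞} {m : ℝ≥0∞}
    (hd : ∑' y, d y ≠ ∞) (hfd : ∀ i y, f i y ≤ d y)
    (hconv : ∀ y, Tendsto (fun i => f i y) l (𝓝 (g y)))
    (hm : ∀ i, ∑' y, f i y = m) :
    ∑' y, g y = m := by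
  classical
  refine le_antisymm ?_ ?_
  · rw [ENNReal.tsum_eq_iSup_sum]
    refine iSup_le fun s => ?_
    refine le_of_tendsto (tendsto_finset_sum s fun y _ => hconv y)
      (Eventually.of_forall fun i => ?_)
    calc ∑ y ∈ s, f i y ≤ ∑' y, f i y := ENNReal.sum_le_tsum s
      _ = m := hm i
  · refine ENNReal.le_of_forall_pos_le_add fun ε hε _ => ?_
    have h0 := ENNReal.tendsto_tsum_compl_atTop_zero hd
    have hev : ∀ᶠ s : Finset Y in atTop, ∑' y : {x // x ∉ s}, d y < (ε : ℝ≥0∞) :=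
      (tendsto_order.1 h0).2 _ (by exact_mod_cast hε)
    obtain ⟨s, hs⟩ := hev.exists
    set t := ∑' y : {x // x ∉ s}, d y with ht
    have key : ∀ i, m ≤ ∑ y ∈ s, f i y + t := by
      intro i
      rw [← hm i]
      calc ∑' y, f i y
          ≤ ∑' y, ((if y ∈ s then f i y else 0) + (if y ∈ s then 0 else d y)) := by
            refine ENNReal.tsum_le_tsum fun y => ?_
            by_cases h : y ∈ s <;> simp [h, hfd i y]
        _ = (∑' y, (if y ∈ s then f i y else 0)) + ∑' y, (if y ∈ s then 0 else d y) :=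
            ENNReal.tsum_add
        _ = ∑ y ∈ s, f i y + t := by
            congr 1
            · rw [tsum_eq_sum (fun y hy => if_neg hy)]
              exact Finset.sum_congr rfl fun y hy => if_pos hy
            · rw [ht]
              have h1 : (∑' y : ({x | x ∉ s} : Set Y), d y) = ∑' y, Set.indicator {x | x ∉ s} d y :=
                tsum_subtype {x | x ∉ s} d
              rw [show (∑' y : {x // x ∉ s}, d y) = ∑' y : ({x | x ∉ s} : Set Y), d y from rfl, h1]
              refine (tsum_congr fun y => ?_).symm
              by_cases h : y ∈ s <;> simp [Set.indicator, h]
    have hT : Tendsto (fun i => ∑ y ∈ s, f i y + t) l (𝓝 (∑ y ∈ s, g y + t)) :=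
      (tendsto_finset_sum s fun y _ => hconv y).add tendsto_const_nhds
    calc m ≤ ∑ y ∈ s, g y + t := ge_of_tendsto' hT key
      _ ≤ (∑' y, g y) + ε := add_le_add (ENNReal.sum_le_tsum s) hs.le

/-- **Existence of an optimal coupling.** For sub-distributions `μ₁, μ₂` of equal total mass and
any cost function `E`, some coupling attains the Kantorovich infimum. -/
theorem exists_optimal_coupling {X : Type*} (μ₁ μ₂ : X → ℝ≥0∞)
    (h₁ : IsSubdist μ₁) (h₂ : IsSubdist μ₂)
    (hmass : ∑' x, μ₁ x = ∑' x, μ₂ x)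
    (E : X × X → ℝ≥0∞) :
    ∃ μ : X × X → ℝ≥0∞, IsCoupling μ μ₁ μ₂ ∧ expCost E μ = kant E μ₁ μ₂ := by
  have hkle : ∀ ν, IsCoupling ν μ₁ μ₂ → kant E μ₁ μ₂ ≤ expCost E ν := fun ν hν => iInf₂_le ν hν
  -- a coupling always exists (the normalized product coupling)
  have hcoupling : ∃ ν, IsCoupling ν μ₁ μ₂ := by
    by_cases hm0 : ∑' x, μ₁ x = 0
    · refine ⟨0, fun x₁ => ?_, fun x₂ => ?_⟩
      · simpa using (ENNReal.tsum_eq_zero.mp hm0 x₁).symm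
      · simpa using (ENNReal.tsum_eq_zero.mp (hmass ▸ hm0) x₂).symm
    · have hmtop : (∑' x, μ₁ x) ≠ ∞ := (lt_of_le_of_lt h₁ ENNReal.one_lt_top).ne
      refine ⟨fun p => μ₁ p.1 * μ₂ p.2 * (∑' x, μ₁ x)⁻¹, fun x₁ => ?_, fun x₂ => ?_⟩
      · show (∑' x₂, μ₁ x₁ * μ₂ x₂ * (∑' x, μ₁ x)⁻¹) = μ₁ x₁
        rw [ENNReal.tsum_mul_right, ENNReal.tsum_mul_left, ← hmass, mul_assoc,
          ENNReal.mul_inv_cancel hm0 hmtop, mul_one]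
      · show (∑' x₁, μ₁ x₁ * μ₂ x₂ * (∑' x, μ₁ x)⁻¹) = μ₂ x₂
        rw [ENNReal.tsum_mul_right, ENNReal.tsum_mul_right, mul_right_comm,
          ENNReal.mul_inv_cancel hm0 hmtop, one_mul]
  by_cases hk : kant E μ₁ μ₂ = ∞
  · obtain ⟨ν, hν⟩ := hcoupling
    exact ⟨ν, hν, by rw [hk]; exact top_le_iff.mp (hk ▸ hkle ν hν)⟩
  -- minimizing sequence
  have hseq : ∀ n : ℕ, ∃ ν, IsCoupling ν μ₁ μ₂ ∧
      expCost E ν ≤ kant E μ₁ μ₂ + ((n : ℝ≥0∞))⁻¹ := by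
    intro n
    have hlt : kant E μ₁ μ₂ < kant E μ₁ μ₂ + ((n : ℝ≥0∞))⁻¹ :=
      ENNReal.lt_add_right hk (ENNReal.inv_ne_zero.mpr (ENNReal.natCast_ne_top n))
    have := hlt
    rw [kant, iInf_lt_iff] at this
    obtain ⟨ν, hν⟩ := this
    rw [iInf_lt_iff] at hν
    obtain ⟨hν1, hν2⟩ := hν
    exact ⟨ν, hν1, hν2.le⟩
  choose μs hμs hcost using hseq
  -- expected cost tends to the infimum
  have htends : Tendsto (fun n => expCost E (μs n)) atTop (𝓝 (kant E μ₁ μ₂)) := by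
    have hb : Tendsto (fun n : ℕ => kant E μ₁ μ₂ + ((n : ℝ≥0∞))⁻¹) atTop
        (𝓝 (kant E μ₁ μ₂ + 0)) :=
      tendsto_const_nhds.add ENNReal.tendsto_inv_nat_nhds_zero
    rw [add_zero] at hb
    exact tendsto_of_tendsto_of_tendsto_of_le_of_le tendsto_const_nhds hb
      (fun n => hkle _ (hμs n)) hcost
  -- ultrafilter limits
  obtain ⟨U, hU⟩ : ∃ U : Ultrafilter ℕ, (U : Filter ℕ) ≤ atTop :=
    ⟨Ultrafilter.of atTop, Ultrafilter.of_le _⟩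
  have hlim : ∀ f : ℕ → ℝ≥0∞, ∃ a, Tendsto f (U : Filter ℕ) (𝓝 a) := by
    intro f
    obtain ⟨a, -, ha⟩ := isCompact_univ.ultrafilter_le_nhds (U.map f)
      (le_principal_iff.2 (by simp))
    exact ⟨a, ha⟩
  choose μ hμ using fun p => hlim fun n => μs n (p : X × X)
  choose c hc using fun p => hlim fun n => E (p : X × X) * μs n p
  -- μ is a coupling
  have hcpl : IsCoupling μ μ₁ μ₂ := by
    constructor
    · intro x₁
      refine tsum_lim_eq_of_dominated (f := fun n x₂ => μs n (x₁, x₂)) (d := μ₂)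
        (ne_top_of_le_ne_top ENNReal.one_ne_top h₂) (fun n x₂ => ?_)
        (fun x₂ => hμ (x₁, x₂)) (fun n => (hμs n).1 x₁)
      rw [← (hμs n).2 x₂]
      exact ENNReal.le_tsum x₁
    · intro x₂
      refine tsum_lim_eq_of_dominated (f := fun n x₁ => μs n (x₁, x₂)) (d := μ₁)
        (ne_top_of_le_ne_top ENNReal.one_ne_top h₁) (fun n x₁ => ?_)
        (fun x₁ => hμ (x₁, x₂)) (fun n => (hμs n).2 x₂)
      rw [← (hμs n).1 x₁]
      exact ENNReal.le_tsum x₂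
  -- the cost of μ is at most the infimum
  have hEc : ∀ p, E p * μ p ≤ c p := by
    intro p
    rcases eq_or_ne (E p) ∞ with hE | hE
    · rcases eq_or_ne (μ p) 0 with h0 | h0
      · simp [h0]
      · have : Tendsto (fun n => E p * μs n p) (U : Filter ℕ) (𝓝 (E p * μ p)) :=
          ENNReal.Tendsto.const_mul (hμ p) (Or.inl h0)
        exact (tendsto_nhds_unique this (hc p)).le
    · have : Tendsto (fun n => E p * μs n p) (U : Filter ℕ) (𝓝 (E p * μ p)) :=
        ENNReal.Tendsto.const_mul (hμ p) (Or.inr hE)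
      exact (tendsto_nhds_unique this (hc p)).le
  have hcle : (∑' p, c p) ≤ kant E μ₁ μ₂ := by
    rw [ENNReal.tsum_eq_iSup_sum]
    refine iSup_le fun s => ?_
    have t1 : Tendsto (fun n => ∑ p ∈ s, E p * μs n p) (U : Filter ℕ) (𝓝 (∑ p ∈ s, c p)) :=
      tendsto_finset_sum s fun p _ => hc p
    have t2 : Tendsto (fun n => expCost E (μs n)) (U : Filter ℕ) (𝓝 (kant E μ₁ μ₂)) :=
      htends.mono_left hU
    exact le_of_tendsto_of_tendsto' t1 t2 fun n => ENNReal.sum_le_tsum s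
  refine ⟨μ, hcpl, le_antisymm ?_ (hkle μ hcpl)⟩
  calc expCost E μ = ∑' p, E p * μ p := rfl
    _ ≤ ∑' p, c p := ENNReal.tsum_le_tsum hEc
    _ ≤ kant E μ₁ μ₂ := hcle
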